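/- For all R, R_d ∈ SO(3) with Ψ(R, R_d) < 2, if the attitude error vector e_R = 0 then R = R_d. -/

import Mathlib

open Real Matrix

/-- `SO(3)`: real 3×3 matrices `Q` with `Qᵀ Q = I` and `det Q = 1`. -/
def SO3 (Q : Matrix (Fin 3) (Fin 3) ℝ) : Prop :=
  Qᵀ * Q = 1 ∧ Q.det = 1

/-- The attitude error function `Ψ(R, R_d) = (1/2) tr(I − R_dᵀ R)`. -/
noncomputable def Psi (R Rd : Matrix (Fin 3) (Fin 3) ℝ) : ℝ :=
  (1 / 2 : ℝ) * (1 - Rdᵀ * R).trace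

/-- The attitude error vector `e_R = (1/2) (R_dᵀ R − Rᵀ R_d)∨`, where `∨` is the
vee map from skew-symmetric matrices to `ℝ³`. -/
noncomputable def errVec (R Rd : Matrix (Fin 3) (Fin 3) ℝ) : EuclideanSpace ℝ (Fin 3) :=
  (1 / 2 : ℝ) • (WithLp.toLp 2 ![(Rdᵀ * R - Rᵀ * Rd) 2 1, (Rdᵀ * R - Rᵀ * Rd) 0 2,
    (Rdᵀ * R - Rᵀ * Rd) 1 0] : EuclideanSpace ℝ (Fin 3))

set_option maxHeartbeats 1000000 in
/-- For all `R, R_d ∈ SO(3)` with `Ψ(R, R_d) < 2`, if the attitude error vector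
`e_R = 0` then `R = R_d`. -/
theorem errVec_eq_zero_imp_eq (R Rd : Matrix (Fin 3) (Fin 3) ℝ)
    (hR : SO3 R) (hRd : SO3 Rd) (hΨ : Psi R Rd < 2) (he : errVec R Rd = 0) :
    R = Rd := by
  obtain ⟨hR1, hR2⟩ := hR
  obtain ⟨hRd1, hRd2⟩ := hRd
  set Q := Rdᵀ * R with hQdef
  have hRd1' : Rd * Rdᵀ = 1 := mul_eq_one_comm.mp hRd1
  have hQt : Qᵀ = Rᵀ * Rd := by simp [hQdef, Matrix.transpose_mul]
  have hQ1 : Qᵀ * Q = 1 := by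
    calc Qᵀ * Q = Rᵀ * (Rd * Rdᵀ) * R := by
          simp [hQdef, Matrix.transpose_mul, Matrix.mul_assoc]
    _ = 1 := by rw [hRd1']; simpa using hR1
  have hdet : Q.det = 1 := by
    simp [hQdef, Matrix.det_mul, hR2, hRd2]
  -- symmetry entries from he
  have hs21 : Q 2 1 = Q 1 2 := by
    have := congrArg (fun v => v 0) he
    simp [errVec, hQt.symm, EuclideanSpace, PiLp.smul_apply] at this
    linarith
  have hs02 : Q 0 2 = Q 2 0 := by
    have := congrArg (fun v => v 1) he
    simp [errVec, hQt.symm, EuclideanSpace, PiLp.smul_apply] at this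
    linarith
  have hs10 : Q 1 0 = Q 0 1 := by
    have := congrArg (fun v => v 2) he
    simp [errVec, hQt.symm, EuclideanSpace, PiLp.smul_apply] at this
    linarith
  have hs20 : Q 2 0 = Q 0 2 := hs02.symm
  clear_value Q
  -- adjugate = transpose
  have hadj : Q.adjugate = Qᵀ := by
    have h := Matrix.mul_adjugate Q
    rw [hdet, one_smul] at h
    have h2 : Qᵀ * (Q * Q.adjugate) = Qᵀ * 1 := by rw [h]
    rwa [← Matrix.mul_assoc, hQ1, Matrix.one_mul, Matrix.mul_one] at h2
  -- orthogonality equations (a=Q00, b=Q11, c=Q22, p=Q01, q=Q02, r=Q12)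
  have E : ∀ i j, (Qᵀ * Q) i j = (1 : Matrix (Fin 3) (Fin 3) ℝ) i j := fun i j => by
    rw [hQ1]
  have e00 : Q 0 0 * Q 0 0 + Q 0 1 * Q 0 1 + Q 0 2 * Q 0 2 = 1 := by
    have := E 0 0
    simp [Matrix.mul_apply, Fin.sum_univ_three, Matrix.one_apply, hs10, hs20, hs21] at this
    linear_combination this
  have e11 : Q 0 1 * Q 0 1 + Q 1 1 * Q 1 1 + Q 1 2 * Q 1 2 = 1 := by
    have := E 1 1
    simp [Matrix.mul_apply, Fin.sum_univ_three, Matrix.one_apply, hs10, hs20, hs21] at this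
    linear_combination this
  have e22 : Q 0 2 * Q 0 2 + Q 1 2 * Q 1 2 + Q 2 2 * Q 2 2 = 1 := by
    have := E 2 2
    simp [Matrix.mul_apply, Fin.sum_univ_three, Matrix.one_apply, hs10, hs20, hs21] at this
    linear_combination this
  have e01 : Q 0 0 * Q 0 1 + Q 0 1 * Q 1 1 + Q 0 2 * Q 1 2 = 0 := by
    have := E 0 1
    simp [Matrix.mul_apply, Fin.sum_univ_three, Matrix.one_apply, hs10, hs20, hs21] at this
    linear_combination this
  have e02 : Q 0 0 * Q 0 2 + Q 0 1 * Q 1 2 + Q 0 2 * Q 2 2 = 0 := by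
    have := E 0 2
    simp [Matrix.mul_apply, Fin.sum_univ_three, Matrix.one_apply, hs10, hs20, hs21] at this
    linear_combination this
  have e12 : Q 0 1 * Q 0 2 + Q 1 1 * Q 1 2 + Q 1 2 * Q 2 2 = 0 := by
    have := E 1 2
    simp [Matrix.mul_apply, Fin.sum_univ_three, Matrix.one_apply, hs10, hs20, hs21] at this
    linear_combination this
  -- cofactor equations from adjugate = transpose
  rw [Matrix.adjugate_fin_three] at hadj
  have A : ∀ i j, (!![Q 1 1 * Q 2 2 - Q 1 2 * Q 2 1, -(Q 0 1 * Q 2 2) + Q 0 2 * Q 2 1,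
      Q 0 1 * Q 1 2 - Q 0 2 * Q 1 1;
      -(Q 1 0 * Q 2 2) + Q 1 2 * Q 2 0, Q 0 0 * Q 2 2 - Q 0 2 * Q 2 0,
      -(Q 0 0 * Q 1 2) + Q 0 2 * Q 1 0;
      Q 1 0 * Q 2 1 - Q 1 1 * Q 2 0, -(Q 0 0 * Q 2 1) + Q 0 1 * Q 2 0,
      Q 0 0 * Q 1 1 - Q 0 1 * Q 1 0] : Matrix (Fin 3) (Fin 3) ℝ) i j = Q j i := fun i j => by
    rw [hadj]; simp [Matrix.transpose_apply]
  have c00 : Q 1 1 * Q 2 2 - Q 1 2 * Q 1 2 = Q 0 0 := by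
    have := A 0 0; simp [hs10, hs20, hs21] at this; linear_combination this
  have c11 : Q 0 0 * Q 2 2 - Q 0 2 * Q 0 2 = Q 1 1 := by
    have := A 1 1; simp [hs10, hs20, hs21] at this; linear_combination this
  have c01 : Q 0 1 * (1 + Q 2 2) = Q 0 2 * Q 1 2 := by
    have := A 0 1; simp [hs10, hs20, hs21] at this; linear_combination -this
  have c02 : Q 0 2 * (1 + Q 1 1) = Q 0 1 * Q 1 2 := by
    have := A 0 2; simp [hs10, hs20, hs21] at this; linear_combination -this
  have c12 : Q 1 2 * (1 + Q 0 0) = Q 0 1 * Q 0 2 := by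
    have := A 1 2; simp [hs10, hs20, hs21] at this; linear_combination -this
  -- trace bound
  have htr : Q 0 0 + Q 1 1 + Q 2 2 > -1 := by
    have ht : (1 - Q).trace = 3 - (Q 0 0 + Q 1 1 + Q 2 2) := by
      simp [Matrix.trace_fin_three, Matrix.sub_apply, Matrix.one_apply]
      try ring
    simp only [Psi] at hΨ
    rw [← hQdef, ht] at hΨ
    linarith
  have hT : (0:ℝ) < 1 + Q 0 0 + Q 1 1 + Q 2 2 := by linarith
  -- off-diagonals vanish
  have hp0 : Q 0 1 = 0 := by
    have h1 : Q 0 1 * (1 + Q 0 0 + Q 1 1 + Q 2 2) = 0 := by linear_combination c01 + e01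
    rcases mul_eq_zero.mp h1 with h | h
    · exact h
    · linarith
  have hq0 : Q 0 2 = 0 := by
    have h1 : Q 0 2 * (1 + Q 0 0 + Q 1 1 + Q 2 2) = 0 := by linear_combination c02 + e02
    rcases mul_eq_zero.mp h1 with h | h
    · exact h
    · linarith
  have hr0 : Q 1 2 = 0 := by
    have h1 : Q 1 2 * (1 + Q 0 0 + Q 1 1 + Q 2 2) = 0 := by linear_combination c12 + e12
    rcases mul_eq_zero.mp h1 with h | h
    · exact h
    · linarith
  -- diagonals = 1
  have ea : Q 0 0 * Q 0 0 = 1 := by linear_combination e00 - Q 0 1 * hp0 - Q 0 2 * hq0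
  have eb : Q 1 1 * Q 1 1 = 1 := by linear_combination e11 - Q 0 1 * hp0 - Q 1 2 * hr0
  have ec : Q 2 2 * Q 2 2 = 1 := by linear_combination e22 - Q 0 2 * hq0 - Q 1 2 * hr0
  have habc : Q 0 0 = Q 1 1 * Q 2 2 := by linear_combination -c00 - Q 1 2 * hr0
  have hbac : Q 1 1 = Q 0 0 * Q 2 2 := by linear_combination -c11 - Q 0 2 * hq0
  have ha1 : Q 0 0 = 1 := by
    rcases mul_self_eq_one_iff.mp ea with h | h
    · exact h
    · exfalso
      have hbc : Q 1 1 * Q 2 2 = -1 := by rw [← habc, h]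
      nlinarith [sq_nonneg (Q 1 1 + Q 2 2), eb, ec, htr, h]
  have hb1 : Q 1 1 = 1 := by
    rcases mul_self_eq_one_iff.mp eb with h | h
    · exact h
    · exfalso
      have hcm : Q 2 2 = -1 := by linear_combination -hbac + h - Q 2 2 * ha1
      linarith [htr, ha1, h]
  have hc1 : Q 2 2 = 1 := by linear_combination -hbac + hb1 - Q 2 2 * ha1
  -- Q = 1
  have hQone : Q = 1 := by
    rw [Matrix.eta_fin_three Q, hs10, hs20, hs21, ha1, hb1, hc1, hp0, hq0, hr0]
    exact Matrix.one_fin_three.symm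
  have hfin : Rd * Q = Rd * 1 := by rw [hQone]
  rw [hQdef, ← Matrix.mul_assoc, hRd1', Matrix.one_mul, Matrix.mul_one] at hfin
  exact hfin
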